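/- In the Iwahori-Hecke algebra of type $C_2$, the half twist $\half = H_{w_0}$ satisfies $\half \cdot b_s \equiv -v^0\, b_{sts} \pmod{I_{w_0}}$, where $I_{w_0}$ is the $\mathbb{Z}[v,v^{-1}]$-span of $b_{w_0}$; that is, $H_{w_0} b_s + b_{sts}$ is a $\mathbb{Z}[v,v^{-1}]$-multiple of $b_{w_0}$. -/

import Mathlib

/-- The Weyl group of type `C₂` (dihedral of order 8), elements listed by reduced word. -/
inductive C2 : Type
  | e | s | t | st | ts | sts | tst | w0
  deriving DecidableEq

instance : Fintype C2 :=
  ⟨{C2.e, C2.s, C2.t, C2.st, C2.ts, C2.sts, C2.tst, C2.w0}, by intro x; cases x <;> simp⟩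

namespace C2

/-- Left multiplication by the simple reflection `s`. -/
def sMul : C2 → C2
  | e => s | s => e | t => st | st => t | ts => sts | sts => ts | tst => w0 | w0 => tst

/-- Left multiplication by the simple reflection `t`. -/
def tMul : C2 → C2
  | e => t | t => e | s => ts | ts => s | st => tst | tst => st | sts => w0 | w0 => sts

/-- The Coxeter length. -/
def len : C2 → ℕ
  | e => 0 | s => 1 | t => 1 | st => 2 | ts => 2 | sts => 3 | tst => 3 | w0 => 4

end C2

open LaurentPolynomial

/-- Elements of the Hecke algebra of type `C₂` over `ℤ[v,v⁻¹]`, as coordinate vectors in the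
standard basis `{H_w}`. -/
abbrev HeckeC2 : Type := C2 → LaurentPolynomial ℤ

namespace HeckeC2

/-- Left multiplication by `H_s`, determined by `H_s H_w = H_{sw}` if `ℓ(sw) > ℓ(w)` and
`H_s H_w = H_{sw} + (v⁻¹ - v) H_w` otherwise. -/
noncomputable def Ls (f : HeckeC2) : HeckeC2 := fun u =>
  f (C2.sMul u) + (if C2.len (C2.sMul u) < C2.len u then (T (-1) - T 1) * f u else 0)

/-- Left multiplication by `H_t`. -/
noncomputable def Lt (f : HeckeC2) : HeckeC2 := fun u =>
  f (C2.tMul u) + (if C2.len (C2.tMul u) < C2.len u then (T (-1) - T 1) * f u else 0)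

/-- Left multiplication by the standard basis element `H_w`. -/
noncomputable def Lw : C2 → HeckeC2 → HeckeC2
  | C2.e => id
  | C2.s => Ls
  | C2.t => Lt
  | C2.st => Ls ∘ Lt
  | C2.ts => Lt ∘ Ls
  | C2.sts => Ls ∘ Lt ∘ Ls
  | C2.tst => Lt ∘ Ls ∘ Lt
  | C2.w0 => Ls ∘ Lt ∘ Ls ∘ Lt

/-- The product in the Hecke algebra, expanding the left factor in the standard basis. -/
noncomputable def mul (x y : HeckeC2) : HeckeC2 := fun u => ∑ w : C2, x w * Lw w y u

/-- The standard basis element `H_w`. -/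
noncomputable def H (w : C2) : HeckeC2 := fun u => if u = w then 1 else 0

/-- The Kazhdan–Lusztig basis element `b_w = ∑_{y ≤ w} v^{ℓ(w) - ℓ(y)} H_y` (all KL polynomials
are trivial in dihedral type, and `y < w` iff `ℓ(y) < ℓ(w)`). -/
noncomputable def b (w : C2) : HeckeC2 := fun u =>
  if u = w then 1 else if C2.len u < C2.len w then T ((C2.len w : ℤ) - C2.len u) else 0

end HeckeC2

/-!
Since `b_s = H_s + v H_e`, the product `H_{w₀} b_s` is obtained by applying the left
multiplications `H_s H_t H_s H_t` to `H_s` and to `H_e`. Every step raises the length except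
`H_s H_{w₀} = H_{tst} + (v⁻¹ - v) H_{w₀}`, so `H_{w₀} b_s = v⁻¹ H_{w₀} + H_{tst}`, and this is
exactly `v⁻¹ b_{w₀} - b_{sts}`.
-/

namespace HeckeC2

lemma mul_H_left (w : C2) (y : HeckeC2) : mul (H w) y = Lw w y := by
  funext u
  simp [mul, H, ite_mul]

lemma Ls_add (f g : HeckeC2) : Ls (f + g) = Ls f + Ls g := by
  funext u
  simp only [Ls, Pi.add_apply]
  split_ifs <;> ring

lemma Ls_smul (c : LaurentPolynomial ℤ) (f : HeckeC2) : Ls (c • f) = c • Ls f := by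
  funext u
  simp only [Ls, Pi.smul_apply, smul_eq_mul]
  split_ifs <;> ring

lemma Lt_add (f g : HeckeC2) : Lt (f + g) = Lt f + Lt g := by
  funext u
  simp only [Lt, Pi.add_apply]
  split_ifs <;> ring

lemma Lt_smul (c : LaurentPolynomial ℤ) (f : HeckeC2) : Lt (c • f) = c • Lt f := by
  funext u
  simp only [Lt, Pi.smul_apply, smul_eq_mul]
  split_ifs <;> ring

lemma Ls_H (w : C2) :
    Ls (H w) = H (C2.sMul w) +
      if C2.len (C2.sMul w) < C2.len w then (T (-1) - T 1 : LaurentPolynomial ℤ) • H w else 0 := by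
  funext u
  cases w <;> cases u <;> simp [Ls, H, C2.sMul, C2.len]

lemma Lt_H (w : C2) :
    Lt (H w) = H (C2.tMul w) +
      if C2.len (C2.tMul w) < C2.len w then (T (-1) - T 1 : LaurentPolynomial ℤ) • H w else 0 := by
  funext u
  cases w <;> cases u <;> simp [Lt, H, C2.tMul, C2.len]

lemma Ls_H_of_len_lt_len_sMul {w : C2} (h : C2.len w < C2.len (C2.sMul w)) :
    Ls (H w) = H (C2.sMul w) := by
  rw [Ls_H, if_neg h.not_gt, add_zero]

lemma Ls_H_of_len_sMul_lt {w : C2} (h : C2.len (C2.sMul w) < C2.len w) :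
    Ls (H w) = H (C2.sMul w) + (T (-1) - T 1 : LaurentPolynomial ℤ) • H w := by
  rw [Ls_H, if_pos h]

lemma Lt_H_of_len_lt_len_tMul {w : C2} (h : C2.len w < C2.len (C2.tMul w)) :
    Lt (H w) = H (C2.tMul w) := by
  rw [Lt_H, if_neg h.not_gt, add_zero]

lemma b_s_eq : b C2.s = H C2.s + (T 1 : LaurentPolynomial ℤ) • H C2.e := by
  funext u
  cases u <;> simp [b, H, C2.len]

lemma mul_H_w0_b_s :
    mul (H C2.w0) (b C2.s) = (T (-1) : LaurentPolynomial ℤ) • H C2.w0 + H C2.tst := by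
  simp (disch := decide) only [mul_H_left, b_s_eq, Lw, Function.comp_apply, Ls_add, Ls_smul,
    Lt_add, Lt_smul, Ls_H_of_len_lt_len_sMul, Ls_H_of_len_sMul_lt, Lt_H_of_len_lt_len_tMul,
    C2.sMul, C2.tMul]
  module

lemma T_neg_one_smul_b_w0 :
    (T (-1) : LaurentPolynomial ℤ) • b C2.w0 =
      (T (-1) : LaurentPolynomial ℤ) • H C2.w0 + H C2.tst + b C2.sts := by
  funext u
  cases u <;>
    simp only [b, H, C2.len, Pi.add_apply, Pi.smul_apply, smul_eq_mul, reduceCtorEq, reduceIte,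
      Nat.reduceLT, ← T_add, mul_zero, mul_one, add_zero, zero_add] <;>
    norm_num

end HeckeC2

open HeckeC2

/-- The half twist `HT = H_{w₀}` of type `C₂` satisfies
`HT ⬝ b_s ≡ -v⁰ b_{sts}` modulo the span of `b_{w₀}`:
`H_{w₀} b_s + b_{sts}` is a `ℤ[v,v⁻¹]`-multiple of `b_{w₀}`. -/
theorem C2_halftwist_bs :
    ∃ c : LaurentPolynomial ℤ,
      (fun u => mul (H C2.w0) (b C2.s) u + b C2.sts u) = fun u => c * b C2.w0 u := by
  refine ⟨T (-1), ?_⟩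
  change mul (H C2.w0) (b C2.s) + b C2.sts = (T (-1) : LaurentPolynomial ℤ) • b C2.w0
  rw [mul_H_w0_b_s, T_neg_one_smul_b_w0]
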